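/- For every smooth symmetric matrix field γ : ℝ³ → S₃(ℝ), tr(inc γ) = -divdiv(S γ), where inc is the row-wise-then-column-wise double curl, S(A) = Aᵀ - tr(A)I₃, and divdiv M = ∂ᵢ∂ⱼ Mᵢⱼ. -/

import Mathlib

noncomputable section

/-- Levi-Civita symbol in three dimensions. -/
def lc (i j k : Fin 3) : ℝ :=
  if (i, j, k) = (0, 1, 2) ∨ (i, j, k) = (1, 2, 0) ∨ (i, j, k) = (2, 0, 1) then 1
  else if (i, j, k) = (0, 2, 1) ∨ (i, j, k) = (2, 1, 0) ∨ (i, j, k) = (1, 0, 2) then -1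
  else 0

/-- Partial derivative `∂ᵢ f` of a scalar field on `ℝ³`. -/
def pd (i : Fin 3) (f : (Fin 3 → ℝ) → ℝ) (x : Fin 3 → ℝ) : ℝ :=
  fderiv ℝ f x (Pi.single i 1)

/-- Curl of a vector field: `(curl v)ᵢ = εᵢⱼₖ ∂ⱼ vₖ`. -/
def vcurl (v : (Fin 3 → ℝ) → Fin 3 → ℝ) (x : Fin 3 → ℝ) (i : Fin 3) : ℝ :=
  ∑ j, ∑ k, lc i j k * pd j (fun y => v y k) x

/-- Column-wise curl of a matrix field: `(curl M)ᵢⱼ = εᵢₖₗ ∂ₖ Mₗⱼ`. -/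
def mcurl (M : (Fin 3 → ℝ) → Matrix (Fin 3) (Fin 3) ℝ) (x : Fin 3 → ℝ) :
    Matrix (Fin 3) (Fin 3) ℝ :=
  Matrix.of fun i j => ∑ k, ∑ l, lc i k l * pd k (fun y => M y l j) x

/-- Column-wise divergence of a matrix field: `(div M)ᵢ = ∂ⱼ Mⱼᵢ`. -/
def mdiv (M : (Fin 3 → ℝ) → Matrix (Fin 3) (Fin 3) ℝ) (x : Fin 3 → ℝ) (i : Fin 3) : ℝ :=
  ∑ j, pd j (fun y => M y j i) x

/-- The algebraic operator `S(A) = Aᵀ - tr(A)·I₃`. -/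
def Sop (A : Matrix (Fin 3) (Fin 3) ℝ) : Matrix (Fin 3) (Fin 3) ℝ :=
  A.transpose - A.trace • (1 : Matrix (Fin 3) (Fin 3) ℝ)

/-- `(mskw V)ᵢⱼ = -εᵢⱼₖ Vₖ`. -/
def mskw (V : Fin 3 → ℝ) : Matrix (Fin 3) (Fin 3) ℝ :=
  Matrix.of fun i j => -∑ k, lc i j k * V k

/-- `(vskw M)ᵢ = -(1/2) εᵢⱼₖ Mⱼₖ`. -/
def vskw (M : Matrix (Fin 3) (Fin 3) ℝ) : Fin 3 → ℝ :=
  fun i => -(1 / 2 : ℝ) * ∑ j, ∑ k, lc i j k * M j k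

/-- The incompatibility operator: row-wise curl followed by column-wise curl. -/
def inc (γ : (Fin 3 → ℝ) → Matrix (Fin 3) (Fin 3) ℝ) (x : Fin 3 → ℝ) :
    Matrix (Fin 3) (Fin 3) ℝ :=
  mcurl (fun y => (mcurl (fun z => (γ z).transpose) y).transpose) x

/-- . -/
def divdiv (M : (Fin 3 → ℝ) → Matrix (Fin 3) (Fin 3) ℝ) (x : Fin 3 → ℝ) : ℝ :=
  ∑ i, ∑ j, pd i (fun y => pd j (fun z => M z i j) y) x

/-! Contracting the two Levi-Civita symbols with `εᵢₖₗ εᵢₐᵦ = δₖₐ δₗᵦ - δₖᵦ δₗₐ` gives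
`tr (inc γ) = Δ (tr γ) - ∂ₖ ∂ₗ γₗₖ`, while expanding `S` gives
`divdiv (S γ) = ∂ᵢ ∂ⱼ γⱼᵢ - Δ (tr γ)`. -/

open Finset

section PartialDerivative

variable {f g : (Fin 3 → ℝ) → ℝ} {x : Fin 3 → ℝ}

theorem ContDiff.pd {n : WithTop ℕ∞} (hf : ContDiff ℝ (n + 1) f) (i : Fin 3) :
    ContDiff ℝ n (pd i f) :=
  (hf.fderiv_right le_rfl).clm_apply contDiff_const

theorem pd_sub (hf : DifferentiableAt ℝ f x) (hg : DifferentiableAt ℝ g x) (i : Fin 3) :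
    pd i (fun y => f y - g y) x = pd i f x - pd i g x := by
  simp only [pd, fderiv_fun_sub hf hg, sub_apply]

theorem pd_const_mul (c : ℝ) (hf : DifferentiableAt ℝ f x) (i : Fin 3) :
    pd i (fun y => c * f y) x = c * pd i f x := by
  simp only [pd, fderiv_const_mul hf, smul_apply, smul_eq_mul]

theorem pd_sum {ι : Type*} (s : Finset ι) {F : ι → (Fin 3 → ℝ) → ℝ}
    (hF : ∀ a ∈ s, DifferentiableAt ℝ (F a) x) (i : Fin 3) :
    pd i (fun y => ∑ a ∈ s, F a y) x = ∑ a ∈ s, pd i (F a) x := by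
  simp only [pd, fderiv_fun_sum hF, _root_.sum_apply]

end PartialDerivative

theorem sum_lc_mul_lc (k l a b : Fin 3) :
    ∑ i, lc i k l * lc i a b
      = (if k = a then 1 else 0) * (if l = b then 1 else 0)
        - (if k = b then 1 else 0) * (if l = a then 1 else 0) := by
  fin_cases k <;> fin_cases l <;> fin_cases a <;> fin_cases b <;>
    simp [lc]

section IncompatibilityTrace

variable {γ : (Fin 3 → ℝ) → Matrix (Fin 3) (Fin 3) ℝ} {x : Fin 3 → ℝ}

theorem inc_apply (hγ : ∀ l b, ContDiff ℝ 2 fun z => γ z l b) (i j : Fin 3) :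
    inc γ x i j
      = ∑ k, ∑ l, lc i k l * ∑ a, ∑ b, lc j a b * pd k (pd a fun z => γ z l b) x := by
  have hd : ∀ l a b, Differentiable ℝ (pd a fun z => γ z l b) :=
    fun l a b => ((hγ l b).pd (n := 1) a).differentiable one_ne_zero
  simp only [inc, mcurl, Matrix.of_apply, Matrix.transpose_apply]
  refine sum_congr rfl fun k _ => sum_congr rfl fun l _ => ?_
  rw [pd_sum _ (fun a _ => by fun_prop)]
  refine congrArg _ (sum_congr rfl fun a _ => ?_)
  rw [pd_sum _ (fun b _ => by fun_prop)]
  exact sum_congr rfl fun b _ => pd_const_mul _ (hd l a b x) k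

theorem trace_inc (hγ : ∀ l b, ContDiff ℝ 2 fun z => γ z l b) :
    (inc γ x).trace
      = ∑ k, ∑ l, pd k (pd k fun z => γ z l l) x - ∑ k, ∑ l, pd k (pd l fun z => γ z l k) x := by
  calc (inc γ x).trace
      = ∑ k, ∑ l, ∑ a, ∑ b, (∑ i, lc i k l * lc i a b) * pd k (pd a fun z => γ z l b) x := by
        simp only [Matrix.trace, Matrix.diag, inc_apply hγ, Fin.sum_univ_three]
        ring
    _ = _ := by
        simp [sum_lc_mul_lc, sub_mul, sum_sub_distrib]

theorem Sop_apply (A : Matrix (Fin 3) (Fin 3) ℝ) (i j : Fin 3) :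
    Sop A i j = A j i - (1 : Matrix (Fin 3) (Fin 3) ℝ) i j * ∑ l, A l l := by
  simp [Sop, Matrix.trace, mul_comm]

theorem divdiv_Sop (hγ : ∀ l b, ContDiff ℝ 2 fun z => γ z l b) :
    divdiv (fun y => Sop (γ y)) x
      = ∑ i, ∑ j, pd i (pd j fun z => γ z j i) x - ∑ i, ∑ l, pd i (pd i fun z => γ z l l) x := by
  have hd : ∀ l b, Differentiable ℝ fun z => γ z l b :=
    fun l b => (hγ l b).differentiable two_ne_zero
  have hd2 : ∀ a l b, Differentiable ℝ (pd a fun z => γ z l b) :=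
    fun a l b => ((hγ l b).pd (n := 1) a).differentiable one_ne_zero
  have hpd : ∀ i j, (fun y => pd j (fun z => Sop (γ z) i j) y)
      = fun y => pd j (fun z => γ z j i) y
          - (1 : Matrix (Fin 3) (Fin 3) ℝ) i j * ∑ l, pd j (fun z => γ z l l) y := by
    intro i j
    funext y
    simp only [Sop_apply]
    rw [pd_sub (hd j i y) (by fun_prop), pd_const_mul _ (by fun_prop),
      pd_sum _ fun l _ => hd l l y]
  simp only [divdiv, hpd]
  rw [← sum_sub_distrib]
  refine sum_congr rfl fun i _ => ?_
  calc ∑ j, pd i (fun y => pd j (fun z => γ z j i) y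
          - (1 : Matrix (Fin 3) (Fin 3) ℝ) i j * ∑ l, pd j (fun z => γ z l l) y) x
      = ∑ j, (pd i (pd j fun z => γ z j i) x
          - (1 : Matrix (Fin 3) (Fin 3) ℝ) i j * ∑ l, pd i (pd j fun z => γ z l l) x) :=
        sum_congr rfl fun j _ => by
          rw [pd_sub (hd2 j j i x) (by fun_prop), pd_const_mul _ (by fun_prop),
            pd_sum _ fun l _ => hd2 j l l x]
    _ = _ := by simp [Matrix.one_apply, sum_sub_distrib]

end IncompatibilityTrace

theorem stmt_13_general (γ : (Fin 3 → ℝ) → Matrix (Fin 3) (Fin 3) ℝ)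
    (hγ : ∀ i j, ContDiff ℝ 2 fun x => γ x i j) :
    ∀ x : Fin 3 → ℝ, (inc γ x).trace = -divdiv (fun y => Sop (γ y)) x := by
  intro x
  rw [trace_inc hγ, divdiv_Sop hγ]
  ring

theorem stmt_13 (γ : (Fin 3 → ℝ) → Matrix (Fin 3) (Fin 3) ℝ)
    (hγ : ∀ i j, ContDiff ℝ 2 fun x => γ x i j)
    (hsym : ∀ x, (γ x).transpose = γ x) :
    ∀ x : Fin 3 → ℝ, (inc γ x).trace = -divdiv (fun y => Sop (γ y)) x :=
  stmt_13_general γ hγ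

end
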